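/- Let $S \in \mathbb{R}^{N\times N}$ be skew-symmetric, $H : \mathbb{R}^N \to \mathbb{R}$ continuously differentiable, $h \in \mathbb{R}$, and let $Y_0, Y_1 \in \mathbb{R}^{N\times N}$ be diagonal matrices. Suppose $x_0, x_1 \in \mathbb{R}^N$ satisfy the second-order exponential discrete gradient scheme $e^{Y_1}x_1 = e^{Y_0}x_0 + h\int_0^1 S\,\nabla H\big((1-\tau)\,e^{Y_0}x_0 + \tau\,e^{Y_1}x_1\big)\,d\tau$. Then $H(e^{Y_1}x_1) = H(e^{Y_0}x_0)$. -/

import Mathlib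

/-! With `a = e^{Y₀}x₀` and `b = e^{Y₁}x₁` the scheme is the averaged vector field method
`b - a = h S w`, where `w = ∫₀¹ ∇H((1-τ)a + τb) dτ`. The fundamental theorem of calculus along
the segment from `a` to `b` gives `H b - H a = w ⬝ (b - a) = h (w ⬝ S w)`, which vanishes since
`S` is skew-symmetric. -/

open Matrix MeasureTheory

theorem Matrix.dotProduct_mulVec_self_eq_zero_of_transpose_eq_neg {n R : Type*} [Fintype n]
    [CommRing R] [IsAddTorsionFree R] {S : Matrix n n R} (hS : Sᵀ = -S) (w : n → R) :
    w ⬝ᵥ S *ᵥ w = 0 := by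
  refine self_eq_neg.mp ?_
  calc w ⬝ᵥ S *ᵥ w = Sᵀ *ᵥ w ⬝ᵥ w := by rw [dotProduct_mulVec, mulVec_transpose]
    _ = -(w ⬝ᵥ S *ᵥ w) := by rw [hS, neg_mulVec, neg_dotProduct, dotProduct_comm]

section IntervalIntegral

variable {n : Type*} [Fintype n] {μ : Measure ℝ} {a b : ℝ} {f : ℝ → n → ℝ}

theorem Matrix.mulVec_intervalIntegral (S : Matrix n n ℝ) (hf : IntervalIntegrable f μ a b) :
    S *ᵥ (∫ τ in a..b, f τ ∂μ) = ∫ τ in a..b, S *ᵥ f τ ∂μ :=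
  (LinearMap.toContinuousLinearMap S.mulVecLin).intervalIntegral_comp_comm hf |>.symm

theorem intervalIntegral_dotProduct (hf : IntervalIntegrable f μ a b) (c : n → ℝ) :
    (∫ τ in a..b, f τ ∂μ) ⬝ᵥ c = ∫ τ in a..b, f τ ⬝ᵥ c ∂μ := by
  simp_rw [dotProduct_comm _ c]
  exact (LinearMap.toContinuousLinearMap (dotProductBilin ℝ ℝ c)).intervalIntegral_comp_comm hf
    |>.symm

end IntervalIntegral

section Gradient

variable {n : Type*} [Fintype n] {H : (n → ℝ) → ℝ} {gradH : (n → ℝ) → n → ℝ}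

theorem continuous_of_fderiv_apply_eq_dotProduct (hH : ContDiff ℝ 1 H)
    (hgradH : ∀ y w, fderiv ℝ H y w = gradH y ⬝ᵥ w) : Continuous gradH := by
  classical
  have hgradH_apply : gradH = fun y k => fderiv ℝ H y (Pi.single k 1) := by
    ext y k
    rw [hgradH, dotProduct_single, mul_one]
  rw [hgradH_apply]
  exact continuous_pi fun k => (hH.continuous_fderiv one_ne_zero).clm_apply continuous_const

theorem continuous_gradient_segment (hH : ContDiff ℝ 1 H)
    (hgradH : ∀ y w, fderiv ℝ H y w = gradH y ⬝ᵥ w) (a b : n → ℝ) :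
    Continuous fun τ : ℝ => gradH ((1 - τ) • a + τ • b) :=
  (continuous_of_fderiv_apply_eq_dotProduct hH hgradH).comp (by fun_prop)

theorem integral_gradient_segment_dotProduct (hH : ContDiff ℝ 1 H)
    (hgradH : ∀ y w, fderiv ℝ H y w = gradH y ⬝ᵥ w) (a b : n → ℝ) :
    (∫ τ in (0:ℝ)..1, gradH ((1 - τ) • a + τ • b)) ⬝ᵥ (b - a) = H b - H a := by
  have hline (τ : ℝ) : HasDerivAt (fun t : ℝ => (1 - t) • a + t • b) (b - a) τ := by
    have hfun : (fun t : ℝ => (1 - t) • a + t • b) = AffineMap.lineMap a b :=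
      funext fun t => (AffineMap.lineMap_apply_module a b t).symm
    rw [hfun]
    exact AffineMap.hasDerivAt_lineMap
  have hcont := continuous_gradient_segment hH hgradH a b
  have hderiv : ∀ τ : ℝ, HasDerivAt (fun t : ℝ => H ((1 - t) • a + t • b))
      (gradH ((1 - τ) • a + τ • b) ⬝ᵥ (b - a)) τ := fun τ => by
    rw [← hgradH]
    exact ((hH.differentiable one_ne_zero _).hasFDerivAt).comp_hasDerivAt τ (hline τ)
  rw [intervalIntegral_dotProduct (hcont.intervalIntegrable 0 1),
    intervalIntegral.integral_eq_sub_of_hasDerivAt (fun τ _ => hderiv τ)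
      ((hcont.dotProduct continuous_const).intervalIntegrable 0 1)]
  simp

theorem energy_preservation_of_averaged_vector_field {S : Matrix n n ℝ} (hS : Sᵀ = -S)
    (hH : ContDiff ℝ 1 H) (hgradH : ∀ y w, fderiv ℝ H y w = gradH y ⬝ᵥ w) {h : ℝ} {a b : n → ℝ}
    (hscheme : b = a + h • ∫ τ in (0:ℝ)..1, S *ᵥ gradH ((1 - τ) • a + τ • b)) :
    H b = H a := by
  set w := ∫ τ in (0:ℝ)..1, gradH ((1 - τ) • a + τ • b)
  have hstep : b - a = h • S *ᵥ w := by
    rw [S.mulVec_intervalIntegral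
      ((continuous_gradient_segment hH hgradH a b).intervalIntegrable _ _)]
    exact sub_eq_of_eq_add' hscheme
  have hdiff := integral_gradient_segment_dotProduct hH hgradH a b
  rw [hstep, dotProduct_smul, S.dotProduct_mulVec_self_eq_zero_of_transpose_eq_neg hS,
    smul_zero] at hdiff
  exact sub_eq_zero.mp hdiff.symm

end Gradient

/-- The second-order exponential discrete gradient scheme
`e^{Y₁}x₁ = e^{Y₀}x₀ + h ∫₀¹ S ∇H((1-τ) e^{Y₀}x₀ + τ e^{Y₁}x₁) dτ`, with `S`
skew-symmetric, `H` continuously differentiable and `Y₀ = diagonal y₀`,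
`Y₁ = diagonal y₁` diagonal matrices (whose matrix exponentials are the diagonal
matrices with entries `exp (y₀ k)`, `exp (y₁ k)`), satisfies
`H(e^{Y₁}x₁) = H(e^{Y₀}x₀)`. -/
theorem exponential_discrete_gradient_energy_preservation
    {N : ℕ}
    (S : Matrix (Fin N) (Fin N) ℝ) (hS : Sᵀ = -S)
    (H : (Fin N → ℝ) → ℝ) (gradH : (Fin N → ℝ) → (Fin N → ℝ))
    (hH : ContDiff ℝ 1 H)
    (hgradH : ∀ y w, (fderiv ℝ H y) w = dotProduct (gradH y) w)
    (h : ℝ) (y₀ y₁ : Fin N → ℝ) (x₀ x₁ : Fin N → ℝ)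
    (hscheme : (Matrix.diagonal (fun k => Real.exp (y₁ k))).mulVec x₁
        = (Matrix.diagonal (fun k => Real.exp (y₀ k))).mulVec x₀
          + h • ∫ τ in (0:ℝ)..1, S.mulVec (gradH
              ((1 - τ) • (Matrix.diagonal (fun k => Real.exp (y₀ k))).mulVec x₀
                + τ • (Matrix.diagonal (fun k => Real.exp (y₁ k))).mulVec x₁))) :
    H ((Matrix.diagonal (fun k => Real.exp (y₁ k))).mulVec x₁)
      = H ((Matrix.diagonal (fun k => Real.exp (y₀ k))).mulVec x₀) :=
  energy_preservation_of_averaged_vector_field hS hH hgradH hscheme
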